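/- Let k ≥ 2 be an integer and let f : ℍ → ℂ be a smooth function. Then for all τ ∈ ℍ, ξ_{2−2k}(𝔉_{2−2k}(f))(τ) = ((4π)^{2k−1}/(2k−2)!) · 𝒟^{2k−1}(f)(τ). -/

import Mathlib

noncomputable section

open Complex Real Finset

/-- The upper half-plane, as a subset of `ℂ`. -/
def UpperHalf : Set ℂ := {z : ℂ | 0 < z.im}

/-- The holomorphic Wirtinger derivative `∂f/∂τ = (1/2)(∂f/∂u − i ∂f/∂v)`. -/
def wirtinger (f : ℂ → ℂ) (τ : ℂ) : ℂ :=
  (1 / 2) * (fderiv ℝ f τ 1 - Complex.I * fderiv ℝ f τ Complex.I)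

/-- The antiholomorphic Wirtinger derivative `∂f/∂τ̄ = (1/2)(∂f/∂u + i ∂f/∂v)`. -/
def wirtingerBar (f : ℂ → ℂ) (τ : ℂ) : ℂ :=
  (1 / 2) * (fderiv ℝ f τ 1 + Complex.I * fderiv ℝ f τ Complex.I)

/-- The Maass raising operator `R_κ(f) = 2i ∂f/∂τ + (κ/v) f`. -/
def raise (κ : ℤ) (f : ℂ → ℂ) (τ : ℂ) : ℂ :=
  2 * Complex.I * wirtinger f τ + ((κ : ℂ) / (τ.im : ℂ)) * f τ

/-- Iterated Maass raising operator `R_κ^n = R_{κ+2(n−1)} ∘ ⋯ ∘ R_κ`. -/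
def raiseIter (κ : ℤ) : ℕ → (ℂ → ℂ) → (ℂ → ℂ)
  | 0, f => f
  | n + 1, f => raise (κ + 2 * (n : ℤ)) (raiseIter κ n f)

/-- The flipping operator `𝔉_{2−2k}(f)(τ) = −(v^{2k−2}/(2k−2)!) conj(R_{2−2k}^{2k−2}(f)(τ))`. -/
def flipOp (k : ℕ) (f : ℂ → ℂ) (τ : ℂ) : ℂ :=
  -(((τ.im : ℂ) ^ (2 * k - 2)) / ((2 * k - 2).factorial : ℂ)) *
    (starRingEnd ℂ) (raiseIter (2 - 2 * (k : ℤ)) (2 * k - 2) f τ)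

/-- The weight `−2k` flipping operator `𝔉_{−2k}(f)(τ) = −(v^{2k}/(2k)!) conj(R_{−2k}^{2k}(f)(τ))`. -/
def flipOpNeg (k : ℕ) (f : ℂ → ℂ) (τ : ℂ) : ℂ :=
  -(((τ.im : ℂ) ^ (2 * k)) / ((2 * k).factorial : ℂ)) *
    (starRingEnd ℂ) (raiseIter (-(2 * (k : ℤ))) (2 * k) f τ)

/-- The Bol-type operator `𝒟 = (1/(2πi)) ∂/∂τ`. -/
def bol (f : ℂ → ℂ) : ℂ → ℂ := fun τ => (1 / (2 * (π : ℂ) * Complex.I)) * wirtinger f τ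

/-- Iterates `𝒟^r` of the Bol-type operator. -/
def bolIter (r : ℕ) (f : ℂ → ℂ) : ℂ → ℂ := bol^[r] f

/-- The shadow operator `ξ_{2−2k}(f)(τ) = 2i v^{2−2k} conj(∂f/∂τ̄(τ))`. -/
def xiOp (k : ℕ) (f : ℂ → ℂ) (τ : ℂ) : ℂ :=
  2 * Complex.I * (τ.im : ℂ) ^ ((2 : ℤ) - 2 * k) * (starRingEnd ℂ) (wirtingerBar f τ)

/-- Integral binary quadratic forms `[a,b,c]` of discriminant `D`. -/
def QD (D : ℤ) : Type := {q : ℤ × ℤ × ℤ // q.2.1 ^ 2 - 4 * q.1 * q.2.2 = D}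

/-- `Q(z,1) = a z² + b z + c`. -/
def qval (q : ℤ × ℤ × ℤ) (z : ℂ) : ℂ :=
  (q.1 : ℂ) * z ^ 2 + (q.2.1 : ℂ) * z + (q.2.2 : ℂ)

/-- `Q_τ = (a(u²+v²) + bu + c)/v`. -/
def qtau (q : ℤ × ℤ × ℤ) (τ : ℂ) : ℝ :=
  ((q.1 : ℝ) * (τ.re ^ 2 + τ.im ^ 2) + (q.2.1 : ℝ) * τ.re + (q.2.2 : ℝ)) / τ.im

/-- The exceptional set `E_D`, the union of the geodesics `Q_τ = 0`. -/
def ED (D : ℤ) : Set ℂ := {τ : ℂ | ∃ q : QD D, qtau q.1 τ = 0}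

/-- The incomplete beta function `β(x;r,s) = ∫₀ˣ t^{r−1}(1−t)^{s−1} dt`. -/
def betaInt (x r s : ℝ) : ℝ := ∫ t in (0 : ℝ)..x, t ^ (r - 1) * (1 - t) ^ (s - 1)

/-- The locally harmonic Maass form `𝓕_{1−k,D}` of Bringmann–Kane–Kohnen. -/
def FBKK (k : ℕ) (D : ℕ) (τ : ℂ) : ℂ :=
  (((D : ℝ) ^ ((1 : ℝ) / 2 - (k : ℝ)) / (2 * ((2 * k - 2).choose (k - 1) : ℝ) * π) : ℝ) : ℂ) *
    ∑' q : QD (D : ℤ),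
      ((Real.sign (qtau q.1 τ) : ℝ) : ℂ) * qval q.1 τ ^ (k - 1) *
        ((betaInt ((D : ℝ) * τ.im ^ 2 / (‖qval q.1 τ‖) ^ 2)
            ((k : ℝ) - 1 / 2) (1 / 2) : ℝ) : ℂ)

/-- The function `𝒢_{−k,D}` of Bringmann–Mono. -/
def GBM (k : ℕ) (D : ℕ) (τ : ℂ) : ℂ :=
  (1 / 2 : ℂ) *
    ∑' q : QD (D : ℤ),
      qval q.1 τ ^ k *
        ((betaInt ((D : ℝ) * τ.im ^ 2 / (‖qval q.1 τ‖) ^ 2)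
            ((k : ℝ) + 1 / 2) (1 / 2) : ℝ) : ℂ)

/-- The rising factorial `(a)_n = a(a+1)⋯(a+n−1)`. -/
def risingFactorial (a : ℤ) (n : ℕ) : ℤ := ∏ i ∈ Finset.range n, (a + (i : ℤ))


section XiFlipAux

open Filter

lemma isOpen_upperHalf : IsOpen UpperHalf :=
  isOpen_lt continuous_const Complex.continuous_im

lemma im_ne {τ : ℂ} (hτ : τ ∈ UpperHalf) : (τ.im : ℂ) ≠ 0 :=
  Complex.ofReal_ne_zero.2 (ne_of_gt hτ)

lemma wirtinger_congr {g h : ℂ → ℂ} {τ : ℂ} (H : g =ᶠ[nhds τ] h) :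
    wirtinger g τ = wirtinger h τ := by
  unfold wirtinger; rw [H.fderiv_eq]

lemma wirtingerBar_congr {g h : ℂ → ℂ} {τ : ℂ} (H : g =ᶠ[nhds τ] h) :
    wirtingerBar g τ = wirtingerBar h τ := by
  unfold wirtingerBar; rw [H.fderiv_eq]

lemma wirtinger_const_mul {g : ℂ → ℂ} {τ : ℂ} (hg : DifferentiableAt ℝ g τ) (c : ℂ) :
    wirtinger (fun z => c * g z) τ = c * wirtinger g τ := by
  unfold wirtinger
  rw [fderiv_const_mul hg c]
  simp only [ContinuousLinearMap.smul_apply, smul_eq_mul]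
  ring

lemma wirtingerBar_const_mul {g : ℂ → ℂ} {τ : ℂ} (hg : DifferentiableAt ℝ g τ) (c : ℂ) :
    wirtingerBar (fun z => c * g z) τ = c * wirtingerBar g τ := by
  unfold wirtingerBar
  rw [fderiv_const_mul hg c]
  simp only [ContinuousLinearMap.smul_apply, smul_eq_mul]
  ring

lemma wirtinger_fun_sum {ι : Type*} (s : Finset ι) (F : ι → ℂ → ℂ) (τ : ℂ)
    (hF : ∀ i ∈ s, DifferentiableAt ℝ (F i) τ) :
    wirtinger (fun z => ∑ i ∈ s, F i z) τ = ∑ i ∈ s, wirtinger (F i) τ := by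
  unfold wirtinger
  rw [fderiv_fun_sum hF]
  simp only [ContinuousLinearMap.sum_apply]
  rw [Finset.mul_sum, ← Finset.sum_sub_distrib, Finset.mul_sum]

lemma wirtinger_mul {g h : ℂ → ℂ} {τ : ℂ} (hg : DifferentiableAt ℝ g τ)
    (hh : DifferentiableAt ℝ h τ) :
    wirtinger (fun z => g z * h z) τ = wirtinger g τ * h τ + g τ * wirtinger h τ := by
  unfold wirtinger
  rw [fderiv_fun_mul hg hh]
  simp only [ContinuousLinearMap.add_apply, ContinuousLinearMap.smul_apply, smul_eq_mul]
  ring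

lemma wirtingerBar_mul {g h : ℂ → ℂ} {τ : ℂ} (hg : DifferentiableAt ℝ g τ)
    (hh : DifferentiableAt ℝ h τ) :
    wirtingerBar (fun z => g z * h z) τ = wirtingerBar g τ * h τ + g τ * wirtingerBar h τ := by
  unfold wirtingerBar
  rw [fderiv_fun_mul hg hh]
  simp only [ContinuousLinearMap.add_apply, ContinuousLinearMap.smul_apply, smul_eq_mul]
  ring

lemma hasFDerivAt_comp_im {φ : ℝ → ℂ} {d : ℂ} {τ : ℂ} (hφ : HasDerivAt φ d τ.im) :
    HasFDerivAt (fun z : ℂ => φ z.im)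
      ((ContinuousLinearMap.smulRight (1 : ℝ →L[ℝ] ℝ) d).comp Complex.imCLM) τ :=
  (hφ.hasFDerivAt).comp τ Complex.imCLM.hasFDerivAt

lemma wirtinger_comp_im {φ : ℝ → ℂ} {d : ℂ} {τ : ℂ} (hφ : HasDerivAt φ d τ.im) :
    wirtinger (fun z : ℂ => φ z.im) τ = -(Complex.I / 2) * d := by
  unfold wirtinger
  rw [(hasFDerivAt_comp_im hφ).fderiv]
  simp only [ContinuousLinearMap.coe_comp', Function.comp_apply, Complex.imCLM_apply,
    ContinuousLinearMap.smulRight_apply, ContinuousLinearMap.one_apply,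
    Complex.one_im, Complex.I_im, zero_smul, one_smul]
  ring

lemma wirtingerBar_comp_im {φ : ℝ → ℂ} {d : ℂ} {τ : ℂ} (hφ : HasDerivAt φ d τ.im) :
    wirtingerBar (fun z : ℂ => φ z.im) τ = (Complex.I / 2) * d := by
  unfold wirtingerBar
  rw [(hasFDerivAt_comp_im hφ).fderiv]
  simp only [ContinuousLinearMap.coe_comp', Function.comp_apply, Complex.imCLM_apply,
    ContinuousLinearMap.smulRight_apply, ContinuousLinearMap.one_apply,
    Complex.one_im, Complex.I_im, zero_smul, one_smul]
  ring

lemma hasDerivAt_im_zpow (m : ℤ) {τ : ℂ} (hτ : τ.im ≠ 0) :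
    HasDerivAt (fun t : ℝ => ((t : ℂ)) ^ m) ((m : ℂ) * (τ.im : ℂ) ^ (m - 1)) τ.im :=
  (hasDerivAt_zpow m (τ.im : ℂ) (Or.inl (Complex.ofReal_ne_zero.2 hτ))).comp_ofReal

lemma diffAt_im_zpow (m : ℤ) {τ : ℂ} (hτ : τ.im ≠ 0) :
    DifferentiableAt ℝ (fun z : ℂ => ((z.im : ℂ)) ^ m) τ :=
  (hasFDerivAt_comp_im (hasDerivAt_im_zpow m hτ)).differentiableAt

lemma wirtinger_zpow_mul (m : ℤ) {g : ℂ → ℂ} {τ : ℂ} (hτ : τ.im ≠ 0)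
    (hg : DifferentiableAt ℝ g τ) :
    wirtinger (fun z => ((z.im : ℂ)) ^ m * g z) τ
      = -(Complex.I / 2) * ((m : ℂ) * (τ.im : ℂ) ^ (m - 1)) * g τ
        + (τ.im : ℂ) ^ m * wirtinger g τ := by
  rw [wirtinger_mul (diffAt_im_zpow m hτ) hg,
    wirtinger_comp_im (hasDerivAt_im_zpow m hτ)]

lemma wirtingerBar_zpow_mul (m : ℤ) {g : ℂ → ℂ} {τ : ℂ} (hτ : τ.im ≠ 0)
    (hg : DifferentiableAt ℝ g τ) :
    wirtingerBar (fun z => ((z.im : ℂ)) ^ m * g z) τ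
      = (Complex.I / 2) * ((m : ℂ) * (τ.im : ℂ) ^ (m - 1)) * g τ
        + (τ.im : ℂ) ^ m * wirtingerBar g τ := by
  rw [wirtingerBar_mul (diffAt_im_zpow m hτ) hg,
    wirtingerBar_comp_im (hasDerivAt_im_zpow m hτ)]

lemma two_I_wirtinger_zpow_mul (m : ℤ) {g : ℂ → ℂ} {τ : ℂ} (hτ : τ.im ≠ 0)
    (hg : DifferentiableAt ℝ g τ) :
    2 * Complex.I * wirtinger (fun z => ((z.im : ℂ)) ^ m * g z) τ
      = (m : ℂ) * (τ.im : ℂ) ^ (m - 1) * g τ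
        + (τ.im : ℂ) ^ m * (2 * Complex.I * wirtinger g τ) := by
  rw [wirtinger_zpow_mul m hτ hg]
  linear_combination (-((m : ℂ) * (τ.im : ℂ) ^ (m - 1) * g τ)) * Complex.I_mul_I

lemma wirtingerBar_conj {g : ℂ → ℂ} {τ : ℂ} (hg : DifferentiableAt ℝ g τ) :
    wirtingerBar (fun z => (starRingEnd ℂ) (g z)) τ
      = (starRingEnd ℂ) (wirtinger g τ) := by
  have hD : HasFDerivAt (fun z => (starRingEnd ℂ) (g z))
      (((Complex.conjCLE : ℂ ≃L[ℝ] ℂ) : ℂ →L[ℝ] ℂ).comp (fderiv ℝ g τ)) τ := by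
    have h1 := ((Complex.conjCLE : ℂ ≃L[ℝ] ℂ) : ℂ →L[ℝ] ℂ).hasFDerivAt.comp τ
      hg.hasFDerivAt
    simpa [Function.comp_def, Complex.conjCLE_apply] using h1
  unfold wirtinger wirtingerBar
  rw [hD.fderiv]
  simp only [ContinuousLinearMap.coe_comp', Function.comp_apply,
    ContinuousLinearEquiv.coe_coe, Complex.conjCLE_apply]
  rw [map_mul, map_sub, map_mul, Complex.conj_I]
  simp only [map_div₀, map_one, map_ofNat]
  ring

end XiFlipAux
section XiFlipAux2

/-- Smoothness (all finite orders) on the upper half-plane. -/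
def Sm (g : ℂ → ℂ) : Prop := ∀ m : ℕ, ContDiffOn ℝ m g UpperHalf

lemma Sm.diffAt {g : ℂ → ℂ} (hg : Sm g) {τ : ℂ} (hτ : τ ∈ UpperHalf) :
    DifferentiableAt ℝ g τ :=
  ((hg 1).differentiableOn (by norm_num)).differentiableAt
    (isOpen_upperHalf.mem_nhds hτ)

lemma Sm.wirtinger {g : ℂ → ℂ} (hg : Sm g) : Sm (wirtinger g) := by
  intro m
  have h1 : ContDiffOn ℝ m (fderiv ℝ g) UpperHalf :=
    (hg (m + 1)).fderiv_of_isOpen isOpen_upperHalf (by norm_cast)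
  have h2 : ContDiffOn ℝ m (fun z => fderiv ℝ g z 1) UpperHalf :=
    h1.clm_apply contDiffOn_const
  have h3 : ContDiffOn ℝ m (fun z => fderiv ℝ g z Complex.I) UpperHalf :=
    h1.clm_apply contDiffOn_const
  unfold _root_.wirtinger
  exact contDiffOn_const.mul (h2.sub (contDiffOn_const.mul h3))

lemma Sm.const_mul {g : ℂ → ℂ} (hg : Sm g) (c : ℂ) : Sm (fun z => c * g z) :=
  fun m => contDiffOn_const.mul (hg m)

lemma sm_im : Sm (fun z : ℂ => ((z.im : ℝ) : ℂ)) := fun m =>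
  (Complex.ofRealCLM.contDiff.comp Complex.imCLM.contDiff).contDiffOn

lemma Sm.raise {g : ℂ → ℂ} (hg : Sm g) (κ' : ℤ) : Sm (raise κ' g) := by
  intro m
  unfold _root_.raise
  have hinv : ContDiffOn ℝ m (fun τ : ℂ => (((τ.im : ℝ) : ℂ))⁻¹) UpperHalf :=
    (sm_im m).inv fun τ hτ => im_ne hτ
  simp only [div_eq_mul_inv]
  exact (contDiffOn_const.mul (hg.wirtinger m)).add
    ((contDiffOn_const.mul hinv).mul (hg m))

lemma Sm.raiseIter {f : ℂ → ℂ} (hf : Sm f) (κ : ℤ) (n : ℕ) : Sm (raiseIter κ n f) := by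
  induction n with
  | zero => exact hf
  | succ n ih => exact ih.raise _

/-- `(2i ∂/∂τ)^n`. -/
def wIter : ℕ → (ℂ → ℂ) → ℂ → ℂ
  | 0, f => f
  | n + 1, f => fun τ => 2 * Complex.I * wirtinger (wIter n f) τ

lemma Sm.wIter {f : ℂ → ℂ} (hf : Sm f) (n : ℕ) : Sm (wIter n f) := by
  induction n with
  | zero => exact hf
  | succ n ih => exact ih.wirtinger.const_mul _

end XiFlipAux2
section XiFlipAux3

lemma rising_zero (a : ℤ) : risingFactorial a 0 = 1 := by
  simp [risingFactorial]

lemma rising_succ (a : ℤ) (n : ℕ) :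
    risingFactorial a (n + 1) = risingFactorial a n * (a + n) :=
  Finset.prod_range_succ _ _

lemma rising_succ' (a : ℤ) (n : ℕ) :
    risingFactorial a (n + 1) = a * risingFactorial (a + 1) n := by
  unfold risingFactorial
  rw [Finset.prod_range_succ']
  rw [mul_comm]
  simp only [Nat.cast_zero, add_zero]
  congr 1
  exact Finset.prod_congr rfl fun i _ => by push_cast; ring

lemma rising_eq_zero {a : ℤ} {n i : ℕ} (hi : i < n) (h : a + i = 0) :
    risingFactorial a n = 0 :=
  Finset.prod_eq_zero (Finset.mem_range.2 hi) h

lemma keyZ (κ : ℤ) (n j : ℕ) (hj : j ≤ n + 1) :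
    ((n + 1).choose j : ℤ) * risingFactorial (κ + j) (n + 1 - j)
      = (κ + n + j) * (((n.choose j : ℤ)) * risingFactorial (κ + j) (n - j))
        + (if j = 0 then 0
            else ((n.choose (j - 1) : ℤ)) * risingFactorial (κ + ((j - 1 : ℕ) : ℤ)) (n - (j - 1))) := by
  rcases j with _ | i
  · norm_num [rising_succ]
    ring
  · rw [if_neg (Nat.succ_ne_zero i)]
    simp only [Nat.add_sub_cancel]
    have hi : i ≤ n := by omega
    rcases eq_or_lt_of_le hi with rfl | hlt
    · have h3 : i.choose (i + 1) = 0 := Nat.choose_eq_zero_of_lt (by omega)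
      simp [show i + 1 - (i + 1) = 0 from by omega, show i - (i + 1) = 0 from by omega,
        show i - i = 0 from by omega, rising_zero, h3, Nat.choose_self]
    · obtain ⟨m, rfl⟩ : ∃ m, n = i + 1 + m := ⟨n - (i + 1), by omega⟩
      have e1 : risingFactorial (κ + ((i + 1 : ℕ) : ℤ)) (i + 1 + m + 1 - (i + 1))
          = risingFactorial (κ + ((i + 1 : ℕ) : ℤ)) m * (κ + ((i + 1 : ℕ) : ℤ) + m) := by
        rw [show i + 1 + m + 1 - (i + 1) = m + 1 from by omega, rising_succ]
      have e2 : risingFactorial (κ + (i : ℤ)) (i + 1 + m - i)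
          = (κ + (i : ℤ)) * risingFactorial (κ + (i : ℤ) + 1) m := by
        rw [show i + 1 + m - i = m + 1 from by omega, rising_succ']
      have e3 : i + 1 + m - (i + 1) = m := by omega
      have e4 : risingFactorial (κ + ((i + 1 : ℕ) : ℤ)) m
          = risingFactorial (κ + (i : ℤ) + 1) m := by
        norm_num [add_assoc]
      have hp : (((i + 1 + m + 1).choose (i + 1) : ℕ) : ℤ)
          = ((i + 1 + m).choose i : ℤ) + ((i + 1 + m).choose (i + 1) : ℤ) := by
        exact_mod_cast Nat.choose_succ_succ (i + 1 + m) i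
      have hc : (((i + 1 + m).choose (i + 1) : ℕ) : ℤ) * (i + 1)
          = ((i + 1 + m).choose i : ℤ) * (m + 1) := by
        have := Nat.choose_succ_right_eq (i + 1 + m) i
        have h5 : i + 1 + m - i = m + 1 := by omega
        rw [h5] at this
        exact_mod_cast this
      rw [e1, e2, e3, e4, hp]
      push_cast
      linear_combination (-(risingFactorial (κ + (i : ℤ) + 1) m)) * hc
      
end XiFlipAux3
section XiFlipAux4

/-- Coefficients in the expansion of the iterated raising operator. -/
def coefC (κ : ℤ) (n j : ℕ) : ℂ :=
  (n.choose j : ℂ) * ((risingFactorial (κ + j) (n - j) : ℤ) : ℂ)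

lemma coefC_rec (κ : ℤ) (n j : ℕ) (hj : j ≤ n + 1) :
    coefC κ (n + 1) j
      = ((κ : ℂ) + n + j) * coefC κ n j
        + (if j = 0 then 0 else coefC κ n (j - 1)) := by
  unfold coefC
  rcases j with _ | i
  · rw [if_pos rfl]
    have h := keyZ κ n 0 (by omega)
    rw [if_pos rfl] at h
    exact_mod_cast h
  · rw [if_neg (Nat.succ_ne_zero i)]
    have h := keyZ κ n (i + 1) hj
    rw [if_neg (Nat.succ_ne_zero i)] at h
    exact_mod_cast h

lemma coefC_top (κ : ℤ) (n : ℕ) : coefC κ n (n + 1) = 0 := by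
  simp [coefC, Nat.choose_succ_self]

lemma raiseIter_formula (κ : ℤ) {f : ℂ → ℂ} (hf : Sm f) (n : ℕ) :
    ∀ τ ∈ UpperHalf, raiseIter κ n f τ =
      ∑ j ∈ Finset.range (n + 1),
        coefC κ n j * (((τ.im : ℂ)) ^ ((j : ℤ) - (n : ℤ)) * wIter j f τ) := by
  induction n with
  | zero =>
    intro τ hτ
    simp [raiseIter, coefC, rising_zero, wIter]
  | succ n IH =>
    intro τ hτ
    have hv : (τ.im : ℂ) ≠ 0 := im_ne hτ
    have him : τ.im ≠ 0 := ne_of_gt (show (0 : ℝ) < τ.im from hτ)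
    -- the functions involved
    set g : ℕ → ℂ → ℂ := fun j => wIter j f with hg
    set F : ℂ → ℂ := fun z => ∑ j ∈ Finset.range (n + 1),
        coefC κ n j * (((z.im : ℂ)) ^ ((j : ℤ) - (n : ℤ)) * g j z) with hFdef
    set a : ℕ → ℂ := fun j => ((κ : ℂ) + n + j) * coefC κ n j *
        (((τ.im : ℂ)) ^ ((j : ℤ) - ((n : ℤ) + 1)) * g j τ) with ha
    set b : ℕ → ℂ := fun j => coefC κ n j *
        (((τ.im : ℂ)) ^ ((((j + 1 : ℕ)) : ℤ) - ((n : ℤ) + 1)) * g (j + 1) τ) with hb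
    have hEq : raiseIter κ n f =ᶠ[nhds τ] F :=
      Filter.eventuallyEq_of_mem (isOpen_upperHalf.mem_nhds hτ) fun σ hσ => IH σ hσ
    have hdiffT : ∀ j ∈ Finset.range (n + 1), DifferentiableAt ℝ
        (fun z => coefC κ n j * (((z.im : ℂ)) ^ ((j : ℤ) - (n : ℤ)) * g j z)) τ :=
      fun j _ => ((diffAt_im_zpow _ him).mul ((hf.wIter j).diffAt hτ)).const_mul _
    have h1 : raiseIter κ (n + 1) f τ
        = 2 * Complex.I * wirtinger F τ
          + (((κ + 2 * n : ℤ) : ℂ) / (τ.im : ℂ)) * F τ := by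
      have e : raiseIter κ (n + 1) f = raise (κ + 2 * (n : ℤ)) (raiseIter κ n f) := rfl
      rw [e]
      unfold raise
      rw [wirtinger_congr hEq, hEq.self_of_nhds]
    have h2 : wirtinger F τ = ∑ j ∈ Finset.range (n + 1),
        wirtinger (fun z => coefC κ n j * (((z.im : ℂ)) ^ ((j : ℤ) - (n : ℤ)) * g j z)) τ :=
      wirtinger_fun_sum _ _ τ hdiffT
    have key1 : raiseIter κ (n + 1) f τ = ∑ j ∈ Finset.range (n + 1), (a j + b j) := by
      rw [h1, h2, Finset.mul_sum]
      have hFτ : F τ = ∑ j ∈ Finset.range (n + 1),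
          coefC κ n j * (((τ.im : ℂ)) ^ ((j : ℤ) - (n : ℤ)) * g j τ) := rfl
      rw [hFτ, Finset.mul_sum, ← Finset.sum_add_distrib]
      refine Finset.sum_congr rfl fun j hj => ?_
      have hdg : DifferentiableAt ℝ (g j) τ := (hf.wIter j).diffAt hτ
      rw [wirtinger_const_mul (show DifferentiableAt ℝ (fun z => ((z.im : ℂ)) ^ ((j : ℤ) - (n : ℤ)) * g j z) τ from (diffAt_im_zpow _ him).mul hdg) (coefC κ n j)]
      have h2I := two_I_wirtinger_zpow_mul ((j : ℤ) - (n : ℤ)) him hdg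
      rw [zpow_sub_one₀ hv] at h2I
      have hW : g (j + 1) τ = 2 * Complex.I * wirtinger (g j) τ := rfl
      have hz1 : ((τ.im : ℂ)) ^ ((j : ℤ) - ((n : ℤ) + 1))
          = ((τ.im : ℂ)) ^ ((j : ℤ) - (n : ℤ)) * ((τ.im : ℂ))⁻¹ := by
        rw [← zpow_sub_one₀ hv]
        congr 1
        ring
      have hz2 : ((τ.im : ℂ)) ^ ((((j + 1 : ℕ)) : ℤ) - ((n : ℤ) + 1))
          = ((τ.im : ℂ)) ^ ((j : ℤ) - (n : ℤ)) := by
        congr 1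
        push_cast
        ring
      rw [ha, hb]
      simp only []
      rw [hz1, hz2, hW]
      push_cast at h2I ⊢
      linear_combination (coefC κ n j) * h2I
    -- now the combinatorial re-indexing
    set t : ℕ → ℂ := fun j => coefC κ (n + 1) j *
        (((τ.im : ℂ)) ^ ((j : ℤ) - (((n : ℕ) + 1 : ℕ) : ℤ)) * g j τ) with ht
    have hgoal : ∑ j ∈ Finset.range (n + 1 + 1),
        coefC κ (n + 1) j * (((τ.im : ℂ)) ^ ((j : ℤ) - (((n + 1 : ℕ)) : ℤ)) * wIter j f τ)
        = ∑ j ∈ Finset.range (n + 2), t j := rfl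
    have hts : ∀ j, j ≤ n → t (j + 1) = a (j + 1) + b j := by
      intro j hjn
      rw [ht, ha, hb]
      simp only []
      rw [coefC_rec κ n (j + 1) (by omega), if_neg (Nat.succ_ne_zero j), Nat.add_sub_cancel]
      have hz : ((((j + 1 : ℕ)) : ℤ) - (((n + 1 : ℕ)) : ℤ)) = (((j + 1 : ℕ) : ℤ) - ((n : ℤ) + 1)) := by
        push_cast; ring
      rw [hz]
      push_cast
      ring
    have ht0 : t 0 = a 0 := by
      rw [ht, ha]
      simp only []
      rw [coefC_rec κ n 0 (by omega), if_pos rfl]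
      have hz : (((0 : ℕ) : ℤ) - (((n + 1 : ℕ)) : ℤ)) = (((0 : ℕ) : ℤ) - ((n : ℤ) + 1)) := by
        push_cast; ring
      rw [hz]
      push_cast
      ring
    have haTop : a (n + 1) = 0 := by
      rw [ha]
      simp only []
      rw [coefC_top]
      ring
    rw [key1, hgoal, Finset.sum_range_succ' t (n + 1)]
    rw [Finset.sum_congr rfl (fun j hj => hts j (by
      have := Finset.mem_range.mp hj; omega)), ht0]
    rw [Finset.sum_add_distrib]
    have hsa : ∑ j ∈ Finset.range (n + 1), a j
        = ∑ j ∈ Finset.range (n + 1), a (j + 1) + a 0 := by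
      have e1 : ∑ j ∈ Finset.range (n + 2), a j
          = ∑ j ∈ Finset.range (n + 1), a (j + 1) + a 0 := Finset.sum_range_succ' a (n + 1)
      have e2 : ∑ j ∈ Finset.range (n + 2), a j
          = ∑ j ∈ Finset.range (n + 1), a j + a (n + 1) := Finset.sum_range_succ a (n + 1)
      rw [e2, haTop, add_zero] at e1
      exact e1
    rw [Finset.sum_add_distrib, hsa]
    ring

end XiFlipAux4
section XiFlipAux5

lemma wIter_eq_bolIter {f : ℂ → ℂ} (hf : Sm f) (n : ℕ) :
    ∀ τ ∈ UpperHalf, wIter n f τ = (-(4 * (π : ℂ))) ^ n * bolIter n f τ := by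
  induction n with
  | zero =>
    intro τ _
    simp [wIter, bolIter]
  | succ n IH =>
    intro τ hτ
    have hpow : (-(4 * (π : ℂ))) ^ n ≠ 0 :=
      pow_ne_zero _ (by
        simp only [neg_ne_zero]
        exact mul_ne_zero (by norm_num) (Complex.ofReal_ne_zero.2 Real.pi_ne_zero))
    have hdiff : DifferentiableAt ℝ (wIter n f) τ := (hf.wIter n).diffAt hτ
    have hEq : bolIter n f =ᶠ[nhds τ]
        (fun z => ((-(4 * (π : ℂ))) ^ n)⁻¹ * wIter n f z) :=
      Filter.eventuallyEq_of_mem (isOpen_upperHalf.mem_nhds hτ) fun σ hσ => by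
        rw [IH σ hσ, inv_mul_cancel_left₀ hpow]
    have e1 : bolIter (n + 1) f τ
        = (1 / (2 * (π : ℂ) * Complex.I)) * wirtinger (bolIter n f) τ := by
      unfold bolIter
      rw [Function.iterate_succ_apply']
      rfl
    have e2 : wirtinger (bolIter n f) τ
        = ((-(4 * (π : ℂ))) ^ n)⁻¹ * wirtinger (wIter n f) τ := by
      rw [wirtinger_congr hEq, wirtinger_const_mul hdiff]
    have e3 : wIter (n + 1) f τ = 2 * Complex.I * wirtinger (wIter n f) τ := rfl
    rw [e3, e1, e2, pow_succ]
    have hπ : (π : ℂ) ≠ 0 := Complex.ofReal_ne_zero.2 Real.pi_ne_zero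
    field_simp
    linear_combination (2 * (π : ℂ) * wirtinger (wIter n f) τ * (-(4 * (π : ℂ))) ^ n * 2 +
      (wirtinger (wIter n f) τ * 4 - wirtinger (wIter n f) τ * (π : ℂ) * (π : ℂ) ^ n * (-4) ^ n * 4)) *
      Complex.I_mul_I

end XiFlipAux5
section XiFlipAux6

lemma diffAt_conj {g : ℂ → ℂ} {τ : ℂ} (hg : DifferentiableAt ℝ g τ) :
    DifferentiableAt ℝ (fun z => (starRingEnd ℂ) (g z)) τ := by
  have h1 := ((Complex.conjCLE : ℂ ≃L[ℝ] ℂ) : ℂ →L[ℝ] ℂ).hasFDerivAt.comp τ hg.hasFDerivAt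
  have h2 := h1.differentiableAt
  simpa [Function.comp_def, Complex.conjCLE_apply] using h2

lemma raiseIter_collapse {f : ℂ → ℂ} (hf : Sm f) (k : ℕ) (hk : 2 ≤ k)
    {τ : ℂ} (hτ : τ ∈ UpperHalf) :
    raiseIter (2 - 2 * (k : ℤ)) (2 * k - 1) f τ = wIter (2 * k - 1) f τ := by
  have h := raiseIter_formula (2 - 2 * (k : ℤ)) hf (2 * k - 1) τ hτ
  rw [h]
  rw [Finset.sum_eq_single_of_mem (2 * k - 1)
    (Finset.mem_range.mpr (by omega))
    (fun j hj hne => ?_)]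
  · rw [sub_self, zpow_zero, one_mul]
    have h1 : coefC (2 - 2 * (k : ℤ)) (2 * k - 1) (2 * k - 1) = 1 := by
      unfold coefC
      rw [Nat.choose_self, Nat.sub_self, rising_zero]
      norm_num
    rw [h1, one_mul]
  · have hj' : j ≤ 2 * k - 2 := by
      have := Finset.mem_range.mp hj; omega
    have h0 : coefC (2 - 2 * (k : ℤ)) (2 * k - 1) j = 0 := by
      unfold coefC
      rw [rising_eq_zero (i := 2 * k - 2 - j) (by omega) (by push_cast; omega)]
      ring
    rw [h0, zero_mul]

end XiFlipAux6
/-- `ξ_{2−2k} ∘ 𝔉_{2−2k} = ((4π)^{2k−1}/(2k−2)!) 𝒟^{2k−1}` on smooth functions on `ℍ`. -/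
theorem xi_flip (k : ℕ) (hk : 2 ≤ k) (f : ℂ → ℂ)
    (hf : ContDiffOn ℝ (⊤ : ℕ∞) f UpperHalf) (τ : ℂ) (hτ : 0 < τ.im) :
    xiOp k (flipOp k f) τ
      = ((4 * (π : ℂ)) ^ (2 * k - 1) / ((2 * k - 2).factorial : ℂ)) *
          bolIter (2 * k - 1) f τ := by
  have hτS : τ ∈ UpperHalf := hτ
  have hSm : Sm f := fun m => hf.of_le (by exact_mod_cast le_top)
  have hv : (τ.im : ℂ) ≠ 0 := im_ne hτS
  have him : τ.im ≠ 0 := ne_of_gt hτ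
  set m : ℕ := 2 * k - 2 with hm
  set G : ℂ → ℂ := raiseIter (2 - 2 * (k : ℤ)) m f with hG
  have hGsm : Sm G := hSm.raiseIter _ _
  have hGd : DifferentiableAt ℝ G τ := hGsm.diffAt hτS
  have hconjd : DifferentiableAt ℝ (fun z => (starRingEnd ℂ) (G z)) τ := diffAt_conj hGd
  have hflip : flipOp k f = fun z =>
      (-(1 : ℂ) / ((m.factorial : ℂ))) *
        (((z.im : ℂ)) ^ ((m : ℤ)) * (starRingEnd ℂ) (G z)) := by
    funext z
    unfold flipOp
    rw [← hm, ← hG, zpow_natCast]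
    ring
  have hBar : wirtingerBar (flipOp k f) τ
      = (-(1 : ℂ) / (m.factorial : ℂ)) *
        ((Complex.I / 2) * (((m : ℂ)) * (τ.im : ℂ) ^ ((m : ℤ) - 1)) * (starRingEnd ℂ) (G τ)
          + (τ.im : ℂ) ^ ((m : ℤ)) * (starRingEnd ℂ) (wirtinger G τ)) := by
    rw [hflip]
    rw [wirtingerBar_const_mul (show DifferentiableAt ℝ (fun z => ((z.im : ℂ)) ^ ((m : ℤ)) * (starRingEnd ℂ) (G z)) τ from (diffAt_im_zpow _ him).mul hconjd)]
    rw [wirtingerBar_zpow_mul _ him hconjd]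
    rw [wirtingerBar_conj hGd]
    push_cast
    ring
  have hkey : raiseIter (2 - 2 * (k : ℤ)) (m + 1) f τ = raise ((m : ℤ)) G τ := by
    have e : raiseIter (2 - 2 * (k : ℤ)) (m + 1) f
        = raise ((2 - 2 * (k : ℤ)) + 2 * (m : ℤ)) (raiseIter (2 - 2 * (k : ℤ)) m f) := rfl
    rw [e, ← hG]
    congr 1
    omega
  have hm1 : 2 * k - 1 = m + 1 := by omega
  have hcollapse : raiseIter (2 - 2 * (k : ℤ)) (m + 1) f τ = wIter (m + 1) f τ := by
    rw [← hm1]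
    exact raiseIter_collapse hSm k hk hτS
  have hbol : wIter (m + 1) f τ = (-(4 * (π : ℂ))) ^ (m + 1) * bolIter (m + 1) f τ :=
    wIter_eq_bolIter hSm (m + 1) τ hτS
  have hraise : raise ((m : ℤ)) G τ
      = 2 * Complex.I * wirtinger G τ + (((m : ℤ) : ℂ) / (τ.im : ℂ)) * G τ := rfl
  -- main computation
  unfold xiOp
  rw [hBar]
  rw [show ((2 : ℤ) - 2 * (k : ℕ)) = -(m : ℤ) from by omega]
  rw [hm1]
  have hstep : 2 * Complex.I * (τ.im : ℂ) ^ (-(m : ℤ)) *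
      (starRingEnd ℂ) ((-(1 : ℂ) / (m.factorial : ℂ)) *
        ((Complex.I / 2) * (((m : ℂ)) * (τ.im : ℂ) ^ ((m : ℤ) - 1)) * (starRingEnd ℂ) (G τ)
          + (τ.im : ℂ) ^ ((m : ℤ)) * (starRingEnd ℂ) (wirtinger G τ)))
      = (-(1 : ℂ) / (m.factorial : ℂ)) * raise ((m : ℤ)) G τ := by
    rw [hraise]
    simp only [map_mul, map_add, map_div₀, map_neg, map_one, Complex.conj_I,
      map_zpow₀, Complex.conj_ofReal, Complex.conj_conj, Complex.conj_natCast]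
    rw [zpow_neg, zpow_sub_one₀ hv]
    have hV : (τ.im : ℂ) ^ ((m : ℤ)) ≠ 0 := zpow_ne_zero _ hv
    have hA : ((m.factorial : ℂ)) ≠ 0 := Nat.cast_ne_zero.2 m.factorial_ne_zero
    push_cast
    field_simp
    ring_nf
    simp only [Complex.I_sq, map_ofNat, zpow_natCast]
    ring
  rw [hstep, hkey.symm, hcollapse, hbol]
  have hodd : Odd (m + 1) := ⟨k - 1, by omega⟩
  rw [hodd.neg_pow]
  have hA : ((m.factorial : ℂ)) ≠ 0 := Nat.cast_ne_zero.2 m.factorial_ne_zero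
  field_simp
end
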